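/- Total density of the mean-field Bose gas in the condensed regime: let β > 0, λ > 0 and Δ ≥ 0 with ρ^P(β, −Δ) < ∞ (Δ > 0 for any ν ≥ 1, or Δ ≥ 0 for ν ≥ 3). Then for every μ > −Δ + λ·ρ^P(β, −Δ), the map μ' ↦ p_λ^Δ(β,μ') is differentiable at μ with ∂_μ p_λ^Δ(β,μ) = (μ + Δ)/λ. -/

import Mathlib

open MeasureTheory Filter

/-- Thermodynamic-limit pressure of the perfect Bose gas:
`p^P(β,μ) = -(1/(β (2π)^ν)) ∫ log(1 - e^{-β(|k|² - μ)}) dk`. -/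
noncomputable def pP (ν : ℕ) (β μ : ℝ) : ℝ :=
  -(1 / (β * (2 * Real.pi) ^ ν)) *
    ∫ k : EuclideanSpace ℝ (Fin ν), Real.log (1 - Real.exp (-(β * (‖k‖ ^ 2 - μ))))

/-- Thermodynamic-limit total density of the perfect Bose gas:
`ρ^P(β,μ) = (2π)^{-ν} ∫ (e^{β(|k|² - μ)} - 1)⁻¹ dk`. -/
noncomputable def rhoP (ν : ℕ) (β μ : ℝ) : ℝ :=
  ((2 * Real.pi) ^ ν)⁻¹ *
    ∫ k : EuclideanSpace ℝ (Fin ν), (Real.exp (β * (‖k‖ ^ 2 - μ)) - 1)⁻¹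

/-- Free energy of the perfect Bose gas with gap `Δ`:
`f^{P,Δ}(β,ρ) = sup_{μ ≤ -Δ} (ρ μ - p^P(β,μ))`. -/
noncomputable def fP (ν : ℕ) (β Δ ρ : ℝ) : ℝ :=
  sSup ((fun μ => ρ * μ - pP ν β μ) '' Set.Iic (-Δ))

/-- Grand-canonical pressure of the mean-field Bose gas with gap `Δ` and coupling `lam`:
`p_λ^Δ(β,μ) = sup_{ρ ≥ 0} (μ ρ - f^{P,Δ}(β,ρ) - λ ρ²/2)`. -/
noncomputable def pMF (ν : ℕ) (β lam Δ μ : ℝ) : ℝ :=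
  sSup ((fun ρ => μ * ρ - fP ν β Δ ρ - lam * ρ ^ 2 / 2) '' Set.Ici 0)

section scalar

lemma exp_sub_one_pos' {t : ℝ} (ht : 0 < t) : 0 < Real.exp t - 1 := by
  nlinarith [Real.add_one_le_exp t]

lemma one_sub_exp_neg_pos {t : ℝ} (ht : 0 < t) : 0 < 1 - Real.exp (-t) := by
  have h := Real.exp_lt_one_iff.mpr (neg_lt_zero.mpr ht)
  linarith

lemma key_ident {t : ℝ} (ht : 0 < t) :
    Real.exp (-t) / (1 - Real.exp (-t)) = (Real.exp t - 1)⁻¹ := by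
  have h1 := one_sub_exp_neg_pos ht
  have h2 := exp_sub_one_pos' ht
  rw [Real.exp_neg] at *
  have he := Real.exp_pos t
  field_simp

lemma neg_log_le_inv {t : ℝ} (ht : 0 < t) :
    -Real.log (1 - Real.exp (-t)) ≤ (Real.exp t - 1)⁻¹ := by
  have h1 := one_sub_exp_neg_pos ht
  have h2 : -Real.log (1 - Real.exp (-t)) = Real.log (1 - Real.exp (-t))⁻¹ :=
    (Real.log_inv _).symm
  rw [h2]
  have h3 := Real.log_le_sub_one_of_pos (inv_pos.mpr h1)
  have h4 : (1 - Real.exp (-t))⁻¹ - 1 = Real.exp (-t) / (1 - Real.exp (-t)) := by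
    field_simp
    ring
  rw [h4, key_ident ht] at h3
  exact h3

lemma log_one_sub_exp_nonpos {t : ℝ} (ht : 0 < t) :
    Real.log (1 - Real.exp (-t)) ≤ 0 := by
  apply Real.log_nonpos (one_sub_exp_neg_pos ht).le
  have := Real.exp_pos (-t); linarith

lemma slope_ineq {t s : ℝ} (ht : 0 < t) (hts : t ≤ s) :
    Real.log (1 - Real.exp (-s)) - Real.log (1 - Real.exp (-t)) ≤
      (s - t) * (Real.exp t - 1)⁻¹ := by
  have hs : 0 < s := lt_of_lt_of_le ht hts
  have hB := one_sub_exp_neg_pos ht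
  have hA := one_sub_exp_neg_pos hs
  have hdiv : Real.log ((1 - Real.exp (-s)) / (1 - Real.exp (-t))) ≤
      (1 - Real.exp (-s)) / (1 - Real.exp (-t)) - 1 :=
    Real.log_le_sub_one_of_pos (by positivity)
  rw [Real.log_div (ne_of_gt hA) (ne_of_gt hB)] at hdiv
  have h5 : (1 - Real.exp (-s)) / (1 - Real.exp (-t)) - 1 =
      (Real.exp (-t) - Real.exp (-s)) / (1 - Real.exp (-t)) := by
    field_simp
    ring
  rw [h5] at hdiv
  have h6 : Real.exp (-t) - Real.exp (-s) ≤ (s - t) * Real.exp (-t) := by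
    have h7 : Real.exp (-s) = Real.exp (-t) * Real.exp (-(s - t)) := by
      rw [← Real.exp_add]; ring_nf
    have h8 : 1 - (s - t) ≤ Real.exp (-(s-t)) := by
      nlinarith [Real.add_one_le_exp (-(s-t))]
    nlinarith [Real.exp_pos (-t)]
  have h9 : (Real.exp (-t) - Real.exp (-s)) / (1 - Real.exp (-t)) ≤
      (s - t) * Real.exp (-t) / (1 - Real.exp (-t)) :=
    div_le_div_of_nonneg_right h6 hB.le
  calc Real.log (1 - Real.exp (-s)) - Real.log (1 - Real.exp (-t))
      ≤ (Real.exp (-t) - Real.exp (-s)) / (1 - Real.exp (-t)) := hdiv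
    _ ≤ (s - t) * Real.exp (-t) / (1 - Real.exp (-t)) := h9
    _ = (s - t) * (Real.exp (-t) / (1 - Real.exp (-t))) := by ring
    _ = (s - t) * (Real.exp t - 1)⁻¹ := by rw [key_ident ht]

lemma inv_mono' {t s : ℝ} (ht : 0 < t) (hts : t ≤ s) :
    (Real.exp s - 1)⁻¹ ≤ (Real.exp t - 1)⁻¹ := by
  apply inv_anti₀ (exp_sub_one_pos' ht)
  have := Real.exp_le_exp.mpr hts
  linarith

lemma inv_exp_sub_one_nonneg {t : ℝ} (ht : 0 ≤ t) : 0 ≤ (Real.exp t - 1)⁻¹ := by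
  rcases eq_or_lt_of_le ht with h | h
  · simp [← h]
  · exact (inv_pos.mpr (exp_sub_one_pos' h)).le

end scalar

/-- **Total density of the mean-field Bose gas in the condensed regime.** Let `β > 0`,
`λ > 0`, `Δ ≥ 0` with `ρ^P(β,-Δ) < ∞` (encoded by integrability of the density
integrand at `μ = -Δ`). Then for every `μ > -Δ + λ ρ^P(β,-Δ)`, the map
`μ' ↦ p_λ^Δ(β,μ')` is differentiable at `μ` with `∂_μ p_λ^Δ(β,μ) = (μ + Δ)/λ`. -/
theorem mean_field_total_density_condensed
    (ν : ℕ) (hν : 1 ≤ ν) (β : ℝ) (hβ : 0 < β) (lam : ℝ) (hlam : 0 < lam)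
    (Δ : ℝ) (hΔ : 0 ≤ Δ)
    (hfin : Integrable (fun k : EuclideanSpace ℝ (Fin ν) =>
      (Real.exp (β * (‖k‖ ^ 2 + Δ)) - 1)⁻¹))
    (μ : ℝ) (hμ : -Δ + lam * rhoP ν β (-Δ) < μ) :
    HasDerivAt (fun μ' : ℝ => pMF ν β lam Δ μ') ((μ + Δ) / lam) μ := by
  set ρc := rhoP ν β (-Δ) with hρc
  -- notation
  set D : EuclideanSpace ℝ (Fin ν) → ℝ :=
    fun k => (Real.exp (β * (‖k‖ ^ 2 + Δ)) - 1)⁻¹ with hD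
  have h2pi : (0:ℝ) < (2 * Real.pi) ^ ν := by positivity
  -- a.e. positivity
  have hae : ∀ᵐ k : EuclideanSpace ℝ (Fin ν), 0 < ‖k‖ ^ 2 + Δ := by
    rcases eq_or_lt_of_le hΔ with hΔ0 | hΔpos
    · haveI : Nonempty (Fin ν) := Fin.pos_iff_nonempty.mp hν
      have hsub : {k : EuclideanSpace ℝ (Fin ν) | ¬ 0 < ‖k‖ ^ 2 + Δ} ⊆ {0} := by
        intro k hk
        simp only [Set.mem_setOf_eq, not_lt] at hk
        have hk2 : ‖k‖ ^ 2 ≤ 0 := by rw [← hΔ0] at hk; linarith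
        have : ‖k‖ = 0 := by nlinarith [norm_nonneg k, sq_nonneg ‖k‖]
        simpa [Set.mem_singleton_iff] using norm_eq_zero.mp this
      exact measure_mono_null hsub (measure_singleton 0)
    · filter_upwards with k
      have := sq_nonneg ‖k‖
      nlinarith
  -- measurability of log integrand
  have hmeas : ∀ μ'' : ℝ, AEStronglyMeasurable
      (fun k : EuclideanSpace ℝ (Fin ν) =>
        Real.log (1 - Real.exp (-(β * (‖k‖ ^ 2 - μ''))))) volume := by
    intro μ''
    apply Measurable.aestronglyMeasurable
    apply Real.measurable_log.comp
    fun_prop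
  -- integrability of log integrand for μ'' ≤ -Δ
  have hint : ∀ μ'' ≤ -Δ, Integrable
      (fun k : EuclideanSpace ℝ (Fin ν) =>
        Real.log (1 - Real.exp (-(β * (‖k‖ ^ 2 - μ''))))) := by
    intro μ'' hμ''
    refine hfin.mono (hmeas μ'') ?_
    filter_upwards [hae] with k hk
    have ht : 0 < β * (‖k‖ ^ 2 + Δ) := by positivity
    have hts : β * (‖k‖ ^ 2 + Δ) ≤ β * (‖k‖ ^ 2 - μ'') := by nlinarith
    have hs : 0 < β * (‖k‖ ^ 2 - μ'') := lt_of_lt_of_le ht hts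
    rw [Real.norm_eq_abs, Real.norm_eq_abs]
    rw [abs_of_nonpos (log_one_sub_exp_nonpos hs),
        abs_of_nonneg (inv_exp_sub_one_nonneg (by positivity))]
    exact (neg_log_le_inv hs).trans (inv_mono' ht hts)
  -- pP nonneg for μ'' ≤ -Δ
  have hpP_nonneg : ∀ μ'' ≤ -Δ, 0 ≤ pP ν β μ'' := by
    intro μ'' hμ''
    have hI : (∫ k : EuclideanSpace ℝ (Fin ν),
        Real.log (1 - Real.exp (-(β * (‖k‖ ^ 2 - μ''))))) ≤ 0 := by
      apply integral_nonpos_of_ae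
      filter_upwards [hae] with k hk
      have ht : 0 < β * (‖k‖ ^ 2 + Δ) := by positivity
      have hts : β * (‖k‖ ^ 2 + Δ) ≤ β * (‖k‖ ^ 2 - μ'') := by nlinarith
      exact log_one_sub_exp_nonpos (lt_of_lt_of_le ht hts)
    have hc : (0:ℝ) < 1 / (β * (2 * Real.pi) ^ ν) := by positivity
    unfold pP
    nlinarith
  -- rewrite rhoP at -Δ as integral of D
  have hrho_eq : ρc = ((2 * Real.pi) ^ ν)⁻¹ * ∫ k, D k := by
    rw [hρc]
    unfold rhoP
    simp only [sub_neg_eq_add, hD]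
  have hDnonneg : ∀ k, 0 ≤ D k := fun k =>
    inv_exp_sub_one_nonneg (by positivity)
  have hρc_nonneg : 0 ≤ ρc := by
    rw [hrho_eq]
    exact mul_nonneg (inv_nonneg.mpr h2pi.le) (integral_nonneg hDnonneg)
  -- key tangent inequality for the pressure
  have hkey : ∀ μ'' ≤ -Δ, pP ν β (-Δ) - pP ν β μ'' ≤ ρc * (-Δ - μ'') := by
    intro μ'' hμ''
    have hIμ := hint μ'' hμ''
    have hIΔ := hint (-Δ) le_rfl
    have hptwise : ∀ᵐ k : EuclideanSpace ℝ (Fin ν),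
        Real.log (1 - Real.exp (-(β * (‖k‖ ^ 2 - μ'')))) -
          Real.log (1 - Real.exp (-(β * (‖k‖ ^ 2 - (-Δ))))) ≤
        β * (-Δ - μ'') * D k := by
      filter_upwards [hae] with k hk
      have ht : 0 < β * (‖k‖ ^ 2 + Δ) := by positivity
      have hts : β * (‖k‖ ^ 2 + Δ) ≤ β * (‖k‖ ^ 2 - μ'') := by nlinarith
      have := slope_ineq ht hts
      have heq : ‖k‖ ^ 2 - (-Δ) = ‖k‖ ^ 2 + Δ := by ring
      rw [heq]
      calc Real.log (1 - Real.exp (-(β * (‖k‖ ^ 2 - μ'')))) -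
            Real.log (1 - Real.exp (-(β * (‖k‖ ^ 2 + Δ))))
          ≤ (β * (‖k‖ ^ 2 - μ'') - β * (‖k‖ ^ 2 + Δ)) *
              (Real.exp (β * (‖k‖ ^ 2 + Δ)) - 1)⁻¹ := this
        _ = β * (-Δ - μ'') * D k := by rw [hD]; ring
    have hIneq : (∫ k : EuclideanSpace ℝ (Fin ν),
          (Real.log (1 - Real.exp (-(β * (‖k‖ ^ 2 - μ'')))) -
            Real.log (1 - Real.exp (-(β * (‖k‖ ^ 2 - (-Δ))))))) ≤
        β * (-Δ - μ'') * ∫ k, D k := by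
      rw [← integral_const_mul]
      exact integral_mono_ae (hIμ.sub hIΔ) (hfin.const_mul _) hptwise
    rw [integral_sub hIμ hIΔ] at hIneq
    have hc : (0:ℝ) < 1 / (β * (2 * Real.pi) ^ ν) := by positivity
    have hexp : pP ν β (-Δ) - pP ν β μ'' =
        (1 / (β * (2 * Real.pi) ^ ν)) *
          ((∫ k : EuclideanSpace ℝ (Fin ν),
              Real.log (1 - Real.exp (-(β * (‖k‖ ^ 2 - μ''))))) -
            ∫ k : EuclideanSpace ℝ (Fin ν),
              Real.log (1 - Real.exp (-(β * (‖k‖ ^ 2 - (-Δ)))))) := by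
      unfold pP; ring
    rw [hexp]
    calc (1 / (β * (2 * Real.pi) ^ ν)) * _ ≤
        (1 / (β * (2 * Real.pi) ^ ν)) * (β * (-Δ - μ'') * ∫ k, D k) :=
          mul_le_mul_of_nonneg_left hIneq hc.le
      _ = ρc * (-Δ - μ'') := by
          rw [hrho_eq]
          field_simp
  -- fP lower bound
  have hfP_ge : ∀ ρ : ℝ, 0 ≤ ρ → -Δ * ρ - pP ν β (-Δ) ≤ fP ν β Δ ρ := by
    intro ρ hρ
    apply le_csSup
    · refine ⟨-Δ * ρ, ?_⟩
      rintro x ⟨μ'', hμ'', rfl⟩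
      simp only [Set.mem_Iic] at hμ''
      have := hpP_nonneg μ'' hμ''
      dsimp only
      nlinarith [mul_nonneg hρ (by linarith : (0:ℝ) ≤ -Δ - μ'')]
    · exact ⟨-Δ, Set.mem_Iic.mpr le_rfl, by ring⟩
  -- fP exact value for ρ ≥ ρc
  have hfP_eq : ∀ ρ : ℝ, ρc ≤ ρ → fP ν β Δ ρ = -Δ * ρ - pP ν β (-Δ) := by
    intro ρ hρ
    apply IsGreatest.csSup_eq
    constructor
    · exact ⟨-Δ, Set.mem_Iic.mpr le_rfl, by ring⟩
    · rintro x ⟨μ'', hμ'', rfl⟩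
      simp only [Set.mem_Iic] at hμ''
      have hk := hkey μ'' hμ''
      have h1 : ρc * (-Δ - μ'') ≤ ρ * (-Δ - μ'') := by
        apply mul_le_mul_of_nonneg_right hρ
        linarith
      dsimp only
      nlinarith
  -- explicit formula for pMF in the condensed regime
  have hpMF : ∀ μ' : ℝ, -Δ + lam * ρc < μ' →
      pMF ν β lam Δ μ' = pP ν β (-Δ) + (μ' + Δ) ^ 2 / (2 * lam) := by
    intro μ' hμ'
    set ρs := (μ' + Δ) / lam with hρs
    have hρs_gt : ρc < ρs := by
      rw [hρs, lt_div_iff₀ hlam]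
      nlinarith
    have hρs_nonneg : 0 ≤ ρs := le_of_lt (lt_of_le_of_lt hρc_nonneg hρs_gt)
    apply IsGreatest.csSup_eq
    constructor
    · refine ⟨ρs, Set.mem_Ici.mpr hρs_nonneg, ?_⟩
      dsimp only
      rw [hfP_eq ρs hρs_gt.le, hρs]
      field_simp
      ring
    · rintro x ⟨ρ, hρ, rfl⟩
      simp only [Set.mem_Ici] at hρ
      have h1 := hfP_ge ρ hρ
      dsimp only
      have h2 : (μ' + Δ) * ρ ≤ lam * ρ ^ 2 / 2 + (μ' + Δ) ^ 2 / (2 * lam) := by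
        rw [← sub_nonneg]
        have h3 : lam * ρ ^ 2 / 2 + (μ' + Δ) ^ 2 / (2 * lam) - (μ' + Δ) * ρ =
            (lam * ρ - (μ' + Δ)) ^ 2 / (2 * lam) := by
          field_simp
          ring
        rw [h3]; positivity
      nlinarith
  -- conclude by local congruence
  have hg : HasDerivAt (fun μ' : ℝ => pP ν β (-Δ) + (μ' + Δ) ^ 2 / (2 * lam))
      ((μ + Δ) / lam) μ := by
    have h1 : HasDerivAt (fun μ' : ℝ => (μ' + Δ) ^ 2) (2 * (μ + Δ)) μ := by
      simpa using ((hasDerivAt_id μ).add_const Δ).fun_pow 2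
    have h2 := (h1.div_const (2 * lam)).const_add (pP ν β (-Δ))
    convert h2 using 1
    · rfl
    · rfl
    · rw [mul_div_mul_left _ _ two_ne_zero]
  apply hg.congr_of_eventuallyEq
  filter_upwards [Ioi_mem_nhds hμ] with μ' hμ'
  exact hpMF μ' hμ'
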